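/- arXiv:1603.03575 — 2 statements merged into one kernel-verified Lean document; each statement's English description precedes it below -/
import Mathlib

section
/- Let n ≥ 3 and σ₂ ∈ C_c^∞(ℝ^n) be radially symmetric. Define q(t) = (2π)^{-n} ∫_{ℝ^n} (sin(t|ξ|)/|ξ|) |σ̂₂(ξ)|² dξ for t ≥ 0. Then there is a constant K > 0 such that |q(t)| ≤ K/t² for all t > 0; in particular q is integrable on [0,∞). -/
open MeasureTheory Real Filter
open scoped RealInnerProductSpace ENNReal NNReal
open Set Metric SchwartzMap
open scoped FourierTransform

noncomputable section

abbrev Ed (d : ℕ) := EuclideanSpace ℝ (Fin d)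

/-- The Fourier transform (unnormalized convention) of a real function on `ℝ^n`. -/
def ftransform {n : ℕ} (σ : Ed n → ℝ) (ξ : Ed n) : ℂ :=
  ∫ y : Ed n, Complex.exp (-(⟪y, ξ⟫ : ℝ) * Complex.I) * (σ y : ℂ)

lemma schwartz_htg {E F : Type*} [NormedAddCommGroup E] [NormedSpace ℝ E]
    [NormedAddCommGroup F] [NormedSpace ℝ F] (f : 𝓢(E, F)) :
    Function.HasTemperateGrowth ⇑f := by
  refine ⟨f.smooth', fun n => ?_⟩
  obtain ⟨C, hC⟩ := f.decay 0 n
  exact ⟨0, C, fun x => by simpa using hC.2 x⟩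


lemma schwartz_decay_bound (f : 𝓢(ℝ, ℝ)) (k : ℕ) :
    ∃ C, 0 ≤ C ∧ ∀ x : ℝ, |x| ^ k * |f x| ≤ C / (1 + x ^ 2) := by
  obtain ⟨C₁, hC₁⟩ := f.decay k 0
  obtain ⟨C₂, hC₂⟩ := f.decay (k + 2) 0
  refine ⟨C₁ + C₂, by nlinarith [hC₁.1, hC₂.1], fun x => ?_⟩
  have h1 := hC₁.2 x
  have h2 := hC₂.2 x
  simp only [norm_iteratedFDeriv_zero, Real.norm_eq_abs] at h1 h2
  rw [le_div_iff₀ (by positivity : (0:ℝ) < 1 + x ^ 2)]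
  have : |x| ^ (k + 2) = |x| ^ k * x ^ 2 := by
    rw [pow_add, sq_abs]
  nlinarith [abs_nonneg (f x), abs_nonneg x, pow_nonneg (abs_nonneg x) k]

lemma powmul_integrable (f : 𝓢(ℝ, ℝ)) (k : ℕ) :
    Integrable (fun x : ℝ => x ^ k * f x) := by
  obtain ⟨C, hC0, hC⟩ := schwartz_decay_bound f k
  refine Integrable.mono' (g := fun x => C * (1 + x ^ 2)⁻¹)
    (integrable_inv_one_add_sq.const_mul C)
    ((continuous_pow k).mul f.continuous).aestronglyMeasurable
    (ae_of_all _ fun x => ?_)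
  have := hC x
  rw [Real.norm_eq_abs, abs_mul, abs_pow]
  rw [div_eq_mul_inv] at this
  exact this

lemma powmul_tendsto (f : 𝓢(ℝ, ℝ)) (k : ℕ) :
    Tendsto (fun x : ℝ => x ^ k * f x) atTop (nhds 0) := by
  obtain ⟨C, hC0, hC⟩ := schwartz_decay_bound f k
  have hb : ∀ x : ℝ, ‖x ^ k * f x‖ ≤ (fun x : ℝ => C / (1 + x ^ 2)) x := fun x => by
    rw [Real.norm_eq_abs, abs_mul, abs_pow]; exact hC x
  refine squeeze_zero_norm hb ?_
  have h2 : Tendsto (fun x : ℝ => 1 + x ^ 2) atTop atTop :=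
    tendsto_atTop_add_const_left _ _ (tendsto_pow_atTop two_ne_zero)
  simpa using Tendsto.div_atTop (tendsto_const_nhds (x := C)) h2

lemma abs_sin_mul_le (s x : ℝ) : |Real.sin s * x| ≤ |x| := by
  rw [abs_mul]; exact mul_le_of_le_one_left (abs_nonneg x) (Real.abs_sin_le_one s)

lemma abs_neg_cos_mul_le (s x : ℝ) : |-Real.cos s * x| ≤ |x| := by
  rw [abs_mul, abs_neg]; exact mul_le_of_le_one_left (abs_nonneg x) (Real.abs_cos_le_one s)
lemma oneD (φ : 𝓢(ℝ, ℝ)) (m : ℕ) (hm : 1 ≤ m) :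
    ∃ A, 0 ≤ A ∧
      (∀ t : ℝ, t ≠ 0 →
        |∫ r in Set.Ioi (0:ℝ), Real.sin (t * r) * (r ^ m * φ r)| ≤ A / t ^ 2) ∧
      Continuous (fun t : ℝ => ∫ r in Set.Ioi (0:ℝ), Real.sin (t * r) * (r ^ m * φ r)) := by
  classical
  set φ1 : 𝓢(ℝ, ℝ) := SchwartzMap.derivCLM ℝ ℝ φ with hφ1def
  set φ2 : 𝓢(ℝ, ℝ) := SchwartzMap.derivCLM ℝ ℝ φ1 with hφ2def
  have hφd : ∀ x : ℝ, HasDerivAt φ (φ1 x) x := fun x => by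
    rw [hφ1def, SchwartzMap.derivCLM_apply]
    exact (φ.differentiableAt).hasDerivAt
  have hφ1d : ∀ x : ℝ, HasDerivAt φ1 (φ2 x) x := fun x => by
    rw [hφ2def, SchwartzMap.derivCLM_apply]
    exact (φ1.differentiableAt).hasDerivAt
  set ψ : ℝ → ℝ := fun r => r ^ m * φ r with hψdef
  set ψ1 : ℝ → ℝ := fun r => (m : ℝ) * r ^ (m - 1) * φ r + r ^ m * φ1 r with hψ1def
  set ψ2 : ℝ → ℝ := fun r =>
      ((m : ℝ) * (((m - 1 : ℕ) : ℝ) * r ^ (m - 1 - 1))) * φ r + (m : ℝ) * r ^ (m - 1) * φ1 r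
      + ((m : ℝ) * r ^ (m - 1) * φ1 r + r ^ m * φ2 r) with hψ2def
  have hψd : ∀ r : ℝ, HasDerivAt ψ (ψ1 r) r := fun r =>
    (hasDerivAt_pow m r).mul (hφd r)
  have hψ1d : ∀ r : ℝ, HasDerivAt ψ1 (ψ2 r) r := fun r =>
    (((hasDerivAt_pow (m - 1) r).const_mul (m : ℝ)).mul (hφd r)).add
      ((hasDerivAt_pow m r).mul (hφ1d r))
  -- integrabilities
  have hint_ψ : IntegrableOn ψ (Ioi 0) := (powmul_integrable φ m).integrableOn
  have hint_ψ2 : IntegrableOn ψ2 (Ioi 0) := by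
    have h1 := ((powmul_integrable φ (m - 1 - 1)).const_mul
      ((m : ℝ) * ((m - 1 : ℕ) : ℝ))).integrableOn (s := Ioi 0)
    have h2 := ((powmul_integrable φ1 (m - 1)).const_mul (m : ℝ)).integrableOn (s := Ioi 0)
    have h3 := (powmul_integrable φ2 m).integrableOn (s := Ioi 0)
    refine (((h1.add h2).add (h2.add h3)).congr (Filter.Eventually.of_forall fun r => ?_))
    simp only [Pi.add_apply, hψ2def]; ring
  have hcontψ : Continuous ψ := (continuous_pow m).mul φ.continuous
  have hcontψ1 : Continuous ψ1 :=
    ((continuous_const.mul (continuous_pow (m-1))).mul φ.continuous).add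
      ((continuous_pow m).mul φ1.continuous)
  have hcontψ2 : Continuous ψ2 :=
    (((continuous_const.mul (continuous_const.mul (continuous_pow (m-1-1)))).mul φ.continuous).add
      ((continuous_const.mul (continuous_pow (m-1))).mul φ1.continuous)).add
      (((continuous_const.mul (continuous_pow (m-1))).mul φ1.continuous).add
      ((continuous_pow m).mul φ2.continuous))
  -- limits at infinity
  have hψtop : Tendsto ψ atTop (nhds 0) := powmul_tendsto φ m
  have hψ1top : Tendsto ψ1 atTop (nhds 0) := by
    have := ((powmul_tendsto φ (m - 1)).const_mul (m : ℝ)).add (powmul_tendsto φ1 m)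
    simp only [mul_zero, add_zero] at this
    refine this.congr (fun r => by simp only [hψ1def]; ring)
  have hψ0 : ψ 0 = 0 := by simp [hψdef, zero_pow (by omega : m ≠ 0)]
  have hmeas_sin : ∀ t : ℝ, ∀ g : ℝ → ℝ, Continuous g →
      AEStronglyMeasurable (fun r => Real.sin (t * r) * g r) (volume.restrict (Ioi 0)) :=
    fun t g hg => ((Real.continuous_sin.comp (continuous_const.mul continuous_id)).mul
      hg).aestronglyMeasurable
  have hsinint : ∀ t : ℝ, ∀ g : ℝ → ℝ, Continuous g → IntegrableOn g (Ioi 0) →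
      IntegrableOn (fun r => Real.sin (t * r) * g r) (Ioi 0) := by
    intro t g hg hgint
    exact Integrable.mono' hgint.norm (hmeas_sin t g hg)
      (ae_of_all _ fun r => abs_sin_mul_le (t*r) (g r))
  set A : ℝ := ∫ r in Ioi (0:ℝ), |ψ2 r| with hA
  have hA0 : 0 ≤ A := integral_nonneg (fun r => abs_nonneg _)
  refine ⟨A, hA0, fun t ht => ?_, ?_⟩
  · -- the main bound
    have ht2 : (0:ℝ) < t ^ 2 := by positivity
    set F : ℝ → ℝ := fun r =>
      (-Real.cos (t * r) * ψ r) / t + (Real.sin (t * r) * ψ1 r) / t ^ 2 with hF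
    set G : ℝ → ℝ := fun r =>
      Real.sin (t * r) * ψ r + Real.sin (t * r) * ψ2 r / t ^ 2 with hG
    have hlin : ∀ r : ℝ, HasDerivAt (fun x : ℝ => t * x) t r := fun r => by
      simpa using (hasDerivAt_id r).const_mul t
    have hFd : ∀ r : ℝ, HasDerivAt F (G r) r := by
      intro r
      have hsin : HasDerivAt (fun x : ℝ => Real.sin (t * x)) (Real.cos (t * r) * t) r :=
        (Real.hasDerivAt_sin (t * r)).comp r (hlin r)
      have hcos : HasDerivAt (fun x : ℝ => -Real.cos (t * x)) (Real.sin (t * r) * t) r := by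
        have := ((Real.hasDerivAt_cos (t * r)).comp r (hlin r)).neg
        simpa [neg_mul, Function.comp_def, Pi.neg_def] using this
      have h1 : HasDerivAt (fun x => (-Real.cos (t * x) * ψ x) / t)
          ((Real.sin (t * r) * t * ψ r + (-Real.cos (t * r)) * ψ1 r) / t) r :=
        (hcos.mul (hψd r)).div_const t
      have h2 : HasDerivAt (fun x => (Real.sin (t * x) * ψ1 x) / t ^ 2)
          ((Real.cos (t * r) * t * ψ1 r + Real.sin (t * r) * ψ2 r) / t ^ 2) r :=
        (hsin.mul (hψ1d r)).div_const (t ^ 2)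
      have h3 := h1.add h2
      refine h3.congr_deriv ?_
      rw [hG]
      field_simp
      ring
    have hFtop : Tendsto F atTop (nhds 0) := by
      have hb : ∀ r : ℝ, ‖F r‖ ≤ |ψ r| / |t| + |ψ1 r| / t ^ 2 := by
        intro r
        have e1 : |(-Real.cos (t * r) * ψ r) / t| ≤ |ψ r| / |t| := by
          rw [abs_div]
          exact div_le_div_of_nonneg_right (abs_neg_cos_mul_le _ _) (abs_nonneg t)
        have e2 : |(Real.sin (t * r) * ψ1 r) / t ^ 2| ≤ |ψ1 r| / t ^ 2 := by
          rw [abs_div, abs_pow, sq_abs]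
          exact div_le_div_of_nonneg_right (abs_sin_mul_le _ _) ht2.le
        calc ‖F r‖ ≤ |(-Real.cos (t * r) * ψ r) / t| + |(Real.sin (t * r) * ψ1 r) / t ^ 2| :=
              abs_add_le _ _
          _ ≤ |ψ r| / |t| + |ψ1 r| / t ^ 2 := add_le_add e1 e2
      refine squeeze_zero_norm hb ?_
      have := ((hψtop.abs).div_const |t|).add ((hψ1top.abs).div_const (t ^ 2))
      simpa using this
    have hF0 : F 0 = 0 := by
      simp [hF, hψ0]
    have g1 : IntegrableOn (fun r => Real.sin (t * r) * ψ r) (Ioi 0) :=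
      hsinint t ψ hcontψ hint_ψ
    have g2' : IntegrableOn (fun r => Real.sin (t * r) * ψ2 r) (Ioi 0) :=
      hsinint t ψ2 hcontψ2 hint_ψ2
    have g2 : IntegrableOn (fun r => Real.sin (t * r) * ψ2 r / t ^ 2) (Ioi 0) := by
      exact g2'.div_const (t ^ 2)
    have hGint : IntegrableOn G (Ioi 0) := g1.add g2
    have hIG : ∫ r in Ioi (0:ℝ), G r = 0 - F 0 :=
      integral_Ioi_of_hasDerivAt_of_tendsto ((hFd 0).continuousAt).continuousWithinAt
        (fun x _ => hFd x) hGint hFtop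
    rw [hF0, sub_zero] at hIG
    have hsplit : ∫ r in Ioi (0:ℝ), G r
        = (∫ r in Ioi (0:ℝ), Real.sin (t * r) * ψ r)
          + ∫ r in Ioi (0:ℝ), Real.sin (t * r) * ψ2 r / t ^ 2 := integral_add g1 g2
    have key : (∫ r in Ioi (0:ℝ), Real.sin (t * r) * ψ r)
        = -(∫ r in Ioi (0:ℝ), Real.sin (t * r) * ψ2 r) / t ^ 2 := by
      have h3 : ∫ r in Ioi (0:ℝ), Real.sin (t * r) * ψ2 r / t ^ 2
          = (∫ r in Ioi (0:ℝ), Real.sin (t * r) * ψ2 r) / t ^ 2 := integral_div _ _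
      rw [hIG, h3] at hsplit
      field_simp at hsplit ⊢
      linarith
    have habs : |∫ r in Ioi (0:ℝ), Real.sin (t * r) * ψ2 r| ≤ A := by
      rw [hA]
      calc |∫ r in Ioi (0:ℝ), Real.sin (t * r) * ψ2 r|
          ≤ ∫ r in Ioi (0:ℝ), |Real.sin (t * r) * ψ2 r| :=
            norm_integral_le_integral_norm (μ := volume.restrict (Ioi 0))
              (fun r => Real.sin (t * r) * ψ2 r)
        _ ≤ ∫ r in Ioi (0:ℝ), |ψ2 r| :=
            integral_mono g2'.abs hint_ψ2.abs (fun r => abs_sin_mul_le _ _)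
    calc |∫ r in Ioi (0:ℝ), Real.sin (t * r) * (r ^ m * φ r)|
        = |-(∫ r in Ioi (0:ℝ), Real.sin (t * r) * ψ2 r) / t ^ 2| := by rw [← key]
      _ = |∫ r in Ioi (0:ℝ), Real.sin (t * r) * ψ2 r| / t ^ 2 := by
          rw [abs_div, abs_neg, abs_pow, sq_abs]
      _ ≤ A / t ^ 2 := div_le_div_of_nonneg_right habs ht2.le
  · -- continuity in t
    refine continuous_of_dominated (F := fun t r => Real.sin (t * r) * ψ r)
      (bound := fun r => |ψ r|) (fun t => hmeas_sin t ψ hcontψ)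
      (fun t => ae_of_all _ fun r => abs_sin_mul_le (t*r) (ψ r))
      hint_ψ.abs ?_
    exact ae_of_all _ fun r =>
      (Real.continuous_sin.comp (continuous_id.mul continuous_const)).mul continuous_const
lemma radial_profile {n : ℕ} (hn : 3 ≤ n)
    (σ₂ : Ed n → ℝ) (hσ₂ : ContDiff ℝ (⊤ : ℕ∞) σ₂) (hσ₂c : HasCompactSupport σ₂)
    (hrad : ∀ y y' : Ed n, ‖y‖ = ‖y'‖ → σ₂ y = σ₂ y') :
    ∃ φ : 𝓢(ℝ, ℝ), ∀ ξ : Ed n, ‖ftransform σ₂ ξ‖ ^ 2 = φ ‖ξ‖ := by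
  classical
  have hn0 : 0 < n := by omega
  set σc : Ed n → ℂ := fun y => (σ₂ y : ℂ) with hσc
  have hσc_cd : ContDiff ℝ (⊤ : ℕ∞) σc := Complex.ofRealCLM.contDiff.comp hσ₂
  have hσc_supp : HasCompactSupport σc :=
    hσ₂c.comp_left (g := fun x : ℝ => (x : ℂ)) (by simp)
  set σS : 𝓢(Ed n, ℂ) :=
    { toFun := σc
      smooth' := hσc_cd.of_le (by simp)
      decay' := by
        intro k m
        have h1 : HasCompactSupport (iteratedFDeriv ℝ m σc) := hσc_supp.iteratedFDeriv m
        have h2 : Continuous (fun x : Ed n => ‖x‖ ^ k * ‖iteratedFDeriv ℝ m σc x‖) :=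
          ((continuous_norm.pow k)).mul
            (hσc_cd.continuous_iteratedFDeriv (m := m) (by exact_mod_cast le_top)).norm
        have h3 : HasCompactSupport (fun x : Ed n => ‖x‖ ^ k * ‖iteratedFDeriv ℝ m σc x‖) :=
          (h1.norm).mul_left
        obtain ⟨C, hC⟩ := h2.bounded_above_of_compact_support h3
        exact ⟨C, fun x => (le_abs_self _).trans (hC x)⟩ } with hσS
  set FS : 𝓢(Ed n, ℂ) := SchwartzMap.fourierTransformCLE ℝ 𝓢(Ed n, ℂ) σS with hFSdef
  have hFSapp : ∀ w : Ed n, FS w = 𝓕 σc w := by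
    intro w
    rw [hFSdef]
    rfl
  -- relation between ftransform and the Fourier integral
  have hπ : (2 * π) ≠ 0 := by positivity
  have hFT : ∀ ξ : Ed n, ftransform σ₂ ξ = 𝓕 σc ((2 * π)⁻¹ • ξ) := by
    intro ξ
    rw [Real.fourier_eq']
    unfold ftransform
    congr 1
    ext y
    rw [real_inner_smul_right, smul_eq_mul]
    have harg : (-2 * π * ((2 * π)⁻¹ * ⟪y, ξ⟫) : ℝ) = -⟪y, ξ⟫ := by field_simp
    rw [harg]
    push_cast
    ring_nf
    rfl
  -- radial invariance of the Fourier transform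
  have hradF : ∀ w w' : Ed n, ‖w‖ = ‖w'‖ →
      𝓕 σc w = 𝓕 σc w' := by
    intro w w' hww
    set L := (ℝ ∙ (w - w'))ᗮ
    have hrefl : Submodule.reflection L w = w' := Submodule.reflection_sub hww
    have hcomp : σc ∘ (Submodule.reflection L) = σc := by
      funext y
      simp only [Function.comp_apply, hσc]
      exact congrArg _ (hrad _ _ ((Submodule.reflection L).norm_map y))
    calc 𝓕 σc w
        = 𝓕 (σc ∘ (Submodule.reflection L)) w := by rw [hcomp]
      _ = 𝓕 σc (Submodule.reflection L w) :=
          Real.fourier_comp_linearIsometry (Submodule.reflection L) σc w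
      _ = 𝓕 σc w' := by rw [hrefl]
  -- the unit vector and the scaling map
  set e₀ : Ed n := EuclideanSpace.single (⟨0, hn0⟩ : Fin n) (1 : ℝ) with he₀def
  have he₀ : ‖e₀‖ = 1 := by
    rw [he₀def, EuclideanSpace.norm_single]; norm_num
  set c : Ed n := (2 * π)⁻¹ • e₀ with hcdef
  have hcnorm : ‖c‖ = (2 * π)⁻¹ := by
    rw [hcdef, norm_smul, he₀, norm_eq_abs, abs_of_pos (by positivity), mul_one]
  set L : ℝ →L[ℝ] Ed n := ContinuousLinearMap.toSpanSingleton ℝ c with hLdef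
  have hLapp : ∀ r : ℝ, L r = r • c := fun r => rfl
  have hLnorm : ∀ r : ℝ, ‖L r‖ = (2 * π)⁻¹ * |r| := by
    intro r
    rw [hLapp, norm_smul, hcnorm, norm_eq_abs, mul_comm]
  have hanti : AntilipschitzWith (Real.toNNReal (2 * π)) ⇑L := by
    refine AntilipschitzWith.of_le_mul_dist fun x y => ?_
    rw [dist_eq_norm, dist_eq_norm, ← map_sub, hLnorm, Real.coe_toNNReal _ (by positivity)]
    rw [show (2 * π) * ((2 * π)⁻¹ * |x - y|) = |x - y| by field_simp]
    exact le_of_eq (Real.norm_eq_abs _)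
  set φC : 𝓢(ℝ, ℂ) :=
    SchwartzMap.compCLMOfAntilipschitz ℝ (L.hasTemperateGrowth) hanti FS with hφCdef
  have hφCapp : ∀ r : ℝ, φC r = FS (L r) := fun r => rfl
  -- real and imaginary parts, and the square
  set u : 𝓢(ℝ, ℝ) := SchwartzMap.bilinLeftCLM
    ((ContinuousLinearMap.mul ℝ ℝ).comp Complex.reCLM)
    (Function.HasTemperateGrowth.const (1 : ℝ)) φC with hudef
  set v : 𝓢(ℝ, ℝ) := SchwartzMap.bilinLeftCLM
    ((ContinuousLinearMap.mul ℝ ℝ).comp Complex.imCLM)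
    (Function.HasTemperateGrowth.const (1 : ℝ)) φC with hvdef
  have huapp : ∀ r : ℝ, u r = (φC r).re := fun r => by
    show (φC r).re * 1 = (φC r).re
    exact mul_one _
  have hvapp : ∀ r : ℝ, v r = (φC r).im := fun r => by
    show (φC r).im * 1 = (φC r).im
    exact mul_one _
  set φ : 𝓢(ℝ, ℝ) :=
    SchwartzMap.bilinLeftCLM (ContinuousLinearMap.mul ℝ ℝ) (schwartz_htg u) u
    + SchwartzMap.bilinLeftCLM (ContinuousLinearMap.mul ℝ ℝ) (schwartz_htg v) v with hφdef
  have hφapp : ∀ r : ℝ, φ r = u r * u r + v r * v r := fun r => rfl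
  refine ⟨φ, fun ξ => ?_⟩
  have h1 : ftransform σ₂ ξ = φC ‖ξ‖ := by
    rw [hFT, hφCapp, hFSapp]
    refine hradF _ _ ?_
    rw [hLapp, hcdef, smul_smul, norm_smul, norm_smul, he₀, norm_eq_abs, norm_eq_abs,
      mul_one, abs_mul, abs_of_pos (by positivity : (0:ℝ) < (2*π)⁻¹), abs_norm]
    ring
  rw [h1, hφapp, huapp, hvapp]
  rw [Complex.sq_norm, Complex.normSq_apply]


/-- for `n ≥ 3` and radially symmetric `σ₂ ∈ C_c^∞(ℝ^n)`, the function
`q(t) = (2π)^{-n} ∫ (sin(t|ξ|)/|ξ|) |σ̂₂(ξ)|² dξ` satisfies `|q(t)| ≤ K/t²` for some `K > 0`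
and all `t > 0`; in particular `q` is integrable on `[0,∞)`. -/
theorem stmt1 {n : ℕ} (hn : 3 ≤ n)
    (σ₂ : Ed n → ℝ) (hσ₂ : ContDiff ℝ (⊤ : ℕ∞) σ₂) (hσ₂c : HasCompactSupport σ₂)
    (hrad : ∀ y y' : Ed n, ‖y‖ = ‖y'‖ → σ₂ y = σ₂ y')
    (q : ℝ → ℝ)
    (hq : ∀ t, q t = (2 * Real.pi) ^ (-(n : ℝ)) *
      ∫ ξ : Ed n, (Real.sin (t * ‖ξ‖) / ‖ξ‖) * ‖ftransform σ₂ ξ‖ ^ 2) :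
    ∃ K > (0 : ℝ), (∀ t > (0 : ℝ), |q t| ≤ K / t ^ 2) ∧ IntegrableOn q (Set.Ici 0) := by
  classical
  have hn0 : 0 < n := by omega
  obtain ⟨φ, hφξ⟩ := radial_profile hn σ₂ hσ₂ hσ₂c hrad
  -- nontriviality of Ed n
  haveI : Nontrivial (Ed n) := by
    refine ⟨EuclideanSpace.single (⟨0, hn0⟩ : Fin n) (1 : ℝ), 0, fun h => ?_⟩
    have := congrArg (fun f : Ed n => f ⟨0, hn0⟩) h
    simpa using this
  -- polar coordinates
  have hpolar : ∀ t : ℝ,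
      (∫ ξ : Ed n, (Real.sin (t * ‖ξ‖) / ‖ξ‖) * ‖ftransform σ₂ ξ‖ ^ 2)
      = ((n : ℝ) * (volume (ball (0 : Ed n) 1)).toReal) *
          ∫ r in Ioi (0:ℝ), Real.sin (t * r) * (r ^ (n - 2) * φ r) := by
    intro t
    have h1 : (fun ξ : Ed n => (Real.sin (t * ‖ξ‖) / ‖ξ‖) * ‖ftransform σ₂ ξ‖ ^ 2)
        = fun ξ => (fun r : ℝ => Real.sin (t * r) / r * φ r) ‖ξ‖ := by
      funext ξ; rw [hφξ ξ]
    rw [show (∫ ξ : Ed n, (Real.sin (t * ‖ξ‖) / ‖ξ‖) * ‖ftransform σ₂ ξ‖ ^ 2)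
        = ∫ ξ : Ed n, (fun r : ℝ => Real.sin (t * r) / r * φ r) ‖ξ‖ from by rw [← h1]]
    rw [MeasureTheory.integral_fun_norm_addHaar volume
      (fun r : ℝ => Real.sin (t * r) / r * φ r)]
    simp only [finrank_euclideanSpace_fin, nsmul_eq_mul, smul_eq_mul]
    rw [mul_assoc]
    congr 1
    congr 1
    refine setIntegral_congr_fun measurableSet_Ioi (fun r hr => ?_)
    have hr0 : (r:ℝ) ≠ 0 := ne_of_gt hr
    have hpow : r ^ (n-1) = r ^ (n-2) * r := by
      rw [← pow_succ]; congr 1; omega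
    rw [hpow]
    field_simp
  obtain ⟨A, hA0, hbound, hcont⟩ := oneD φ (n - 2) (by omega)
  set It : ℝ → ℝ := fun t => ∫ r in Ioi (0:ℝ), Real.sin (t * r) * (r ^ (n - 2) * φ r)
    with hIt
  have hvol : 0 < (volume (ball (0:Ed n) 1)).toReal :=
    ENNReal.toReal_pos (measure_ball_pos volume 0 one_pos).ne' measure_ball_lt_top.ne
  set c₀ : ℝ := (2 * Real.pi) ^ (-(n : ℝ)) *
    ((n : ℝ) * (volume (ball (0 : Ed n) 1)).toReal) with hc₀
  have hc₀pos : 0 < c₀ := by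
    have h2π : (0:ℝ) < 2 * Real.pi := by positivity
    have := Real.rpow_pos_of_pos h2π (-(n:ℝ))
    rw [hc₀]
    positivity
  have hq' : ∀ t, q t = c₀ * It t := by
    intro t
    rw [hq t, hpolar t, hc₀, hIt, mul_assoc]
    simp only [mul_assoc]
  refine ⟨c₀ * A + 1, by positivity, fun t ht => ?_, ?_⟩
  · have h1 : |q t| = c₀ * |It t| := by
      rw [hq' t, abs_mul, abs_of_pos hc₀pos]
    rw [h1]
    calc c₀ * |It t| ≤ c₀ * (A / t ^ 2) := by
          exact mul_le_mul_of_nonneg_left (hbound t (ne_of_gt ht)) hc₀pos.le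
      _ = c₀ * A / t ^ 2 := by ring
      _ ≤ (c₀ * A + 1) / t ^ 2 := by
          apply div_le_div_of_nonneg_right (by linarith) (by positivity)
  · have hqc : Continuous q := by
      have : q = fun t => c₀ * It t := funext hq'
      rw [this]
      exact continuous_const.mul hcont
    have h1 : IntegrableOn q (Icc (0:ℝ) 1) := hqc.integrableOn_Icc
    have h2 : IntegrableOn q (Ioi (1:ℝ)) := by
      refine Integrable.mono' (g := fun t => (c₀ * A + 1) * t ^ (-2:ℝ))
        ((integrableOn_Ioi_rpow_of_lt (by norm_num) one_pos).const_mul _)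
        hqc.aestronglyMeasurable.restrict ?_
      refine (ae_restrict_iff' measurableSet_Ioi).2 (ae_of_all _ fun t ht => ?_)
      have ht0 : (0:ℝ) < t := lt_trans one_pos ht
      have hb : |q t| ≤ (c₀ * A + 1) / t ^ 2 := by
        rw [hq' t, abs_mul, abs_of_pos hc₀pos]
        calc c₀ * |It t| ≤ c₀ * (A / t ^ 2) :=
              mul_le_mul_of_nonneg_left (hbound t (ne_of_gt ht0)) hc₀pos.le
          _ = c₀ * A / t ^ 2 := by ring
          _ ≤ (c₀ * A + 1) / t ^ 2 :=
              div_le_div_of_nonneg_right (by linarith) (by positivity)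
      rw [Real.norm_eq_abs]
      calc |q t| ≤ (c₀ * A + 1) / t ^ 2 := hb
        _ = (c₀ * A + 1) * t ^ (-2:ℝ) := by
            rw [Real.rpow_neg ht0.le, show ((2:ℝ)) = ((2:ℕ):ℝ) by norm_num,
              Real.rpow_natCast, div_eq_mul_inv]
    refine ((h1.union h2).mono_set fun t ht => ?_)
    rcases le_or_gt t 1 with h | h
    · exact Or.inl ⟨ht, h⟩
    · exact Or.inr h
end
end

section
/- Let d ≥ 3, θ ∈ C_c^∞(ℝ^d) with θ = 1 on B(0,1), supp θ ⊂ B(0,2), 0 ≤ θ ≤ 1, and θ_ε(x) = θ(√ε x). Then for every p > 1 there is C = C(p,d,θ) with ‖ (∇θ_ε)/|·|^{d−1} + (1−d)(θ_ε − 1)·/|·|^{d+1} ‖_{L^p(ℝ^d)} ≤ C ε^{d(p−1)/(2p)}. -/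
open MeasureTheory Real Filter
open scoped RealInnerProductSpace ENNReal NNReal

noncomputable section

section Aux

variable {d : ℕ}

lemma grad_comp_smul (θ : Ed d → ℝ) (hθ : ContDiff ℝ (⊤ : ℕ∞) θ) (c : ℝ) (x : Ed d) :
    gradient (fun z : Ed d => θ (c • z)) x = c • gradient θ (c • x) := by
  have h1 : HasFDerivAt (fun z : Ed d => c • z)
      (c • ContinuousLinearMap.id ℝ (Ed d)) x := by
    exact (c • ContinuousLinearMap.id ℝ (Ed d)).hasFDerivAt
  have h2 : HasFDerivAt θ (fderiv ℝ θ (c • x)) (c • x) :=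
    (hθ.differentiable (by simp) (c • x)).hasFDerivAt
  have h3 := h2.comp x h1
  have h4 : fderiv ℝ (fun z : Ed d => θ (c • z)) x
      = (fderiv ℝ θ (c • x)).comp (c • ContinuousLinearMap.id ℝ (Ed d)) := h3.fderiv
  simp only [gradient, h4, ContinuousLinearMap.comp_smul, ContinuousLinearMap.comp_id]
  exact (InnerProductSpace.toDual ℝ (Ed d)).symm.map_smul c _

lemma grad_zero_small (θ : Ed d → ℝ) (hθ1 : ∀ x : Ed d, ‖x‖ ≤ 1 → θ x = 1)
    (y : Ed d) (hy : ‖y‖ < 1) : gradient θ y = 0 := by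
  have hmem : Metric.ball (0 : Ed d) 1 ∈ nhds y :=
    Metric.isOpen_ball.mem_nhds (by simpa [Metric.mem_ball, dist_zero_right] using hy)
  have hev : θ =ᶠ[nhds y] fun _ => (1 : ℝ) :=
    Filter.eventually_of_mem hmem fun z hz =>
      hθ1 z (le_of_lt (by simpa [Metric.mem_ball, dist_zero_right] using hz))
  rw [hev.gradient_eq, gradient_fun_const]

lemma grad_zero_big (θ : Ed d → ℝ) (hθ0 : ∀ x : Ed d, 2 ≤ ‖x‖ → θ x = 0)
    (y : Ed d) (hy : 2 < ‖y‖) : gradient θ y = 0 := by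
  have hopen : IsOpen {z : Ed d | 2 < ‖z‖} := by
    have : {z : Ed d | 2 < ‖z‖} = (Metric.closedBall (0 : Ed d) 2)ᶜ := by
      ext z; simp [Metric.mem_closedBall, dist_zero_right, not_le]
    rw [this]; exact Metric.isClosed_closedBall.isOpen_compl
  have hmem : {z : Ed d | 2 < ‖z‖} ∈ nhds y := hopen.mem_nhds hy
  have hev : θ =ᶠ[nhds y] fun _ => (0 : ℝ) :=
    Filter.eventually_of_mem hmem fun z hz => hθ0 z (le_of_lt hz)
  rw [hev.gradient_eq, gradient_fun_const]

end Aux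

set_option maxHeartbeats 1600000 in
/-- key quantitative estimate for the regularized Coulomb kernel. With
`θ_ε(x) = θ(√ε x)`, for every `p > 1` there is `C > 0` with
`‖ (∇θ_ε)/|·|^{d−1} + (1−d)(θ_ε−1)·/|·|^{d+1} ‖_{L^p(ℝ^d)} ≤ C ε^{d(p−1)/(2p)}`. -/
theorem stmt15 {d : ℕ} (hd : 3 ≤ d)
    (θ : Ed d → ℝ) (hθ : ContDiff ℝ (⊤ : ℕ∞) θ) (hθc : HasCompactSupport θ)
    (hθ1 : ∀ x : Ed d, ‖x‖ ≤ 1 → θ x = 1) (hθ0 : ∀ x : Ed d, 2 ≤ ‖x‖ → θ x = 0)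
    (hθ01 : ∀ x, 0 ≤ θ x ∧ θ x ≤ 1)
    (p : ℝ) (hp : 1 < p) :
    ∃ C > (0 : ℝ), ∀ ε > (0 : ℝ),
      (∫ x : Ed d,
        ‖(‖x‖ ^ ((1 : ℝ) - d)) • gradient (fun z : Ed d => θ (Real.sqrt ε • z)) x
          + ((((1 : ℝ) - d) * (θ (Real.sqrt ε • x) - 1)) / ‖x‖ ^ ((d : ℝ) + 1)) • x‖ ^ p) ^
        (1 / p) ≤ C * ε ^ ((d : ℝ) * (p - 1) / (2 * p)) := by
  classical
  have hd3 : (3 : ℝ) ≤ (d : ℝ) := by exact_mod_cast hd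
  have hp0 : (0 : ℝ) < p := lt_trans one_pos hp
  have hpne : p ≠ 0 := hp0.ne'
  -- bound on the gradient of θ
  obtain ⟨M₀, hM₀⟩ := (hθc.fderiv ℝ).exists_bound_of_continuous (hθ.continuous_fderiv (by simp))
  set M : ℝ := max M₀ 0 with hMdef
  have hM0 : 0 ≤ M := le_max_right _ _
  have hgradM : ∀ y : Ed d, ‖gradient θ y‖ ≤ M := by
    intro y
    have : ‖gradient θ y‖ = ‖fderiv ℝ θ y‖ := by
      rw [gradient, LinearIsometryEquiv.norm_map]
    rw [this]
    exact le_trans (hM₀ y) (le_max_left _ _)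
  set K : ℝ := 2 * M + ((d : ℝ) - 1) with hKdef
  have hK : 0 < K := by rw [hKdef]; nlinarith
  have hq0 : 0 < (d : ℝ) * p := by nlinarith
  have hdq : (Module.finrank ℝ (Ed d) : ℝ) < (d : ℝ) * p := by
    rw [finrank_euclideanSpace_fin]
    nlinarith
  set J : ℝ := ∫ y : Ed d, (1 + ‖y‖) ^ (-((d : ℝ) * p)) with hJdef
  have hJ0 : 0 ≤ J :=
    integral_nonneg fun y => Real.rpow_nonneg (by positivity) _
  have hgInt : Integrable (fun y : Ed d => (1 + ‖y‖) ^ (-((d : ℝ) * p))) := by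
    simpa using integrable_one_add_norm (E := Ed d) hdq
  set C : ℝ := K * 2 ^ (d : ℝ) * (J + 1) ^ (1 / p) with hCdef
  have hC : 0 < C := by
    apply mul_pos (mul_pos hK (Real.rpow_pos_of_pos two_pos _))
    exact Real.rpow_pos_of_pos (by linarith) _
  refine ⟨C, hC, ?_⟩
  intro ε hε
  set c : ℝ := Real.sqrt ε with hcdef
  have hc0 : 0 < c := Real.sqrt_pos.2 hε
  have hcrpow : c = ε ^ ((1 : ℝ) / 2) := by rw [hcdef, Real.sqrt_eq_rpow]
  -- the majorant
  set A : ℝ := K ^ p * 2 ^ ((d : ℝ) * p) * ε ^ ((d : ℝ) * p / 2) with hAdef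
  have hA0 : 0 ≤ A := by
    apply mul_nonneg (mul_nonneg _ _) (Real.rpow_nonneg hε.le _)
    · exact Real.rpow_nonneg hK.le _
    · exact Real.rpow_nonneg two_pos.le _
  set maj : Ed d → ℝ := fun x => A * (1 + ‖c • x‖) ^ (-((d : ℝ) * p)) with hmajdef
  -- pointwise bound
  have hpt : ∀ x : Ed d,
      ‖(‖x‖ ^ ((1 : ℝ) - d)) • gradient (fun z : Ed d => θ (c • z)) x
        + ((((1 : ℝ) - d) * (θ (c • x) - 1)) / ‖x‖ ^ ((d : ℝ) + 1)) • x‖ ^ p ≤ maj x := by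
    intro x
    have hmaj0 : 0 ≤ maj x := by
      apply mul_nonneg hA0 (Real.rpow_nonneg (by positivity) _)
    rw [grad_comp_smul θ hθ c x]
    have hnsm : ‖c • x‖ = c * ‖x‖ := by
      rw [norm_smul, Real.norm_eq_abs, abs_of_pos hc0]
    rcases lt_or_ge (c * ‖x‖) 1 with h1 | h1
    · -- everything vanishes
      have hy : ‖c • x‖ < 1 := by rw [hnsm]; exact h1
      have g0 : gradient θ (c • x) = 0 := grad_zero_small θ hθ1 _ hy
      have t1 : θ (c • x) = 1 := hθ1 _ hy.le
      rw [g0, t1]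
      simp only [smul_zero, sub_self, mul_zero, zero_div, zero_smul, add_zero, norm_zero]
      rw [Real.zero_rpow hpne]
      exact hmaj0
    · -- main region
      have hx0 : (0 : ℝ) < ‖x‖ := by
        rcases (norm_nonneg x).lt_or_eq with h | h
        · exact h
        · exfalso; rw [← h, mul_zero] at h1; linarith
      -- step A : gradient term
      have hstepA : ‖(‖x‖ ^ ((1 : ℝ) - d)) • (c • gradient θ (c • x))‖
          ≤ 2 * M * ‖x‖ ^ (-(d : ℝ)) := by
        rcases le_or_gt (c * ‖x‖) 2 with h2 | h2
        · have hn : ‖(‖x‖ ^ ((1 : ℝ) - d)) • (c • gradient θ (c • x))‖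
              = ‖x‖ ^ ((1 : ℝ) - d) * (c * ‖gradient θ (c • x)‖) := by
            rw [norm_smul, norm_smul, Real.norm_eq_abs, Real.norm_eq_abs,
              abs_of_nonneg (Real.rpow_nonneg (norm_nonneg x) _), abs_of_pos hc0]
          rw [hn]
          have key : ‖x‖ ^ ((1 : ℝ) - d) * (c * ‖gradient θ (c • x)‖)
              ≤ ‖x‖ ^ ((1 : ℝ) - d) * (c * M) := by
            apply mul_le_mul_of_nonneg_left _ (Real.rpow_nonneg (norm_nonneg x) _)
            exact mul_le_mul_of_nonneg_left (hgradM _) hc0.le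
          refine le_trans key ?_
          have hc2 : c ≤ 2 / ‖x‖ := by
            rw [le_div_iff₀ hx0]; linarith
          have h3 : ‖x‖ ^ ((1 : ℝ) - d) * (c * M) ≤ ‖x‖ ^ ((1 : ℝ) - d) * (2 / ‖x‖ * M) := by
            apply mul_le_mul_of_nonneg_left _ (Real.rpow_nonneg (norm_nonneg x) _)
            exact mul_le_mul_of_nonneg_right hc2 hM0
          refine le_trans h3 (le_of_eq ?_)
          rw [div_eq_mul_inv, ← Real.rpow_neg_one ‖x‖]
          rw [show ‖x‖ ^ ((1 : ℝ) - d) * (2 * ‖x‖ ^ (-1 : ℝ) * M)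
              = 2 * M * (‖x‖ ^ ((1 : ℝ) - d) * ‖x‖ ^ (-1 : ℝ)) by ring]
          rw [← Real.rpow_add hx0, show (1:ℝ) - ↑d + -1 = -(d:ℝ) by ring]
        · have g0 : gradient θ (c • x) = 0 := by
            apply grad_zero_big θ hθ0
            rw [hnsm]; exact h2
          rw [g0]
          simp only [smul_zero, norm_zero]
          positivity
      -- step B : second term
      have hstepB : ‖((((1 : ℝ) - d) * (θ (c • x) - 1)) / ‖x‖ ^ ((d : ℝ) + 1)) • x‖
          ≤ ((d : ℝ) - 1) * ‖x‖ ^ (-(d : ℝ)) := by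
        have hrp : (0 : ℝ) < ‖x‖ ^ ((d : ℝ) + 1) := Real.rpow_pos_of_pos hx0 _
        rw [norm_smul, Real.norm_eq_abs, abs_div, abs_mul, abs_of_pos hrp]
        have h1d : |(1 : ℝ) - d| = (d : ℝ) - 1 := by
          rw [abs_of_nonpos (by linarith)]; ring
        have hth : |θ (c • x) - 1| ≤ 1 := by
          obtain ⟨ha, hb⟩ := hθ01 (c • x)
          rw [abs_le]; constructor <;> linarith
        rw [h1d]
        have hdiv : ‖x‖ ^ (-(d : ℝ)) = ‖x‖ / ‖x‖ ^ ((d : ℝ) + 1) := by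
          rw [show -(d : ℝ) = 1 - ((d : ℝ) + 1) by ring, Real.rpow_sub hx0, Real.rpow_one]
        calc ((d : ℝ) - 1) * |θ (c • x) - 1| / ‖x‖ ^ ((d : ℝ) + 1) * ‖x‖
            ≤ ((d : ℝ) - 1) * 1 / ‖x‖ ^ ((d : ℝ) + 1) * ‖x‖ := by
              gcongr
              linarith
          _ = ((d : ℝ) - 1) * ‖x‖ ^ (-(d : ℝ)) := by
              rw [hdiv]; ring
      -- the sum
      have hsum : ‖(‖x‖ ^ ((1 : ℝ) - d)) • (c • gradient θ (c • x))
          + ((((1 : ℝ) - d) * (θ (c • x) - 1)) / ‖x‖ ^ ((d : ℝ) + 1)) • x‖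
          ≤ K * ‖x‖ ^ (-(d : ℝ)) := by
        refine le_trans (norm_add_le _ _) ?_
        calc _ ≤ 2 * M * ‖x‖ ^ (-(d : ℝ)) + ((d : ℝ) - 1) * ‖x‖ ^ (-(d : ℝ)) :=
              add_le_add hstepA hstepB
          _ = K * ‖x‖ ^ (-(d : ℝ)) := by rw [hKdef]; ring
      -- convert to the majorant shape
      have hxd : ‖x‖ ^ (-(d : ℝ)) = c ^ (d : ℝ) * (c * ‖x‖) ^ (-(d : ℝ)) := by
        rw [Real.mul_rpow hc0.le (norm_nonneg x), ← mul_assoc, ← Real.rpow_add hc0]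
        simp
      have hmid : (0 : ℝ) < (1 + c * ‖x‖) / 2 := by positivity
      have h2d : (c * ‖x‖) ^ (-(d : ℝ)) ≤ ((1 + c * ‖x‖) / 2) ^ (-(d : ℝ)) :=
        Real.rpow_le_rpow_of_nonpos hmid (by linarith) (neg_nonpos.mpr (by positivity))
      have heq : ((1 + c * ‖x‖) / 2) ^ (-(d : ℝ))
          = 2 ^ (d : ℝ) * (1 + c * ‖x‖) ^ (-(d : ℝ)) := by
        rw [div_eq_mul_inv, Real.mul_rpow (by positivity) (by positivity),
          Real.inv_rpow two_pos.le, ← Real.rpow_neg two_pos.le, neg_neg]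
        ring
      have hfinal : ‖(‖x‖ ^ ((1 : ℝ) - d)) • (c • gradient θ (c • x))
          + ((((1 : ℝ) - d) * (θ (c • x) - 1)) / ‖x‖ ^ ((d : ℝ) + 1)) • x‖
          ≤ K * (c ^ (d : ℝ) * (2 ^ (d : ℝ) * (1 + c * ‖x‖) ^ (-(d : ℝ)))) := by
        refine le_trans hsum ?_
        rw [hxd]
        have : (c * ‖x‖) ^ (-(d : ℝ)) ≤ 2 ^ (d : ℝ) * (1 + c * ‖x‖) ^ (-(d : ℝ)) := by
          rw [← heq]; exact h2d
        exact mul_le_mul_of_nonneg_left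
          (mul_le_mul_of_nonneg_left this (Real.rpow_nonneg hc0.le _)) hK.le
      -- raise to the power p
      have hrp := Real.rpow_le_rpow (norm_nonneg _) hfinal hp0.le
      refine le_trans hrp (le_of_eq ?_)
      simp only [hmajdef]
      rw [hnsm]
      have e0 : (0 : ℝ) ≤ (1 + c * ‖x‖) ^ (-(d : ℝ)) := Real.rpow_nonneg (by positivity) _
      rw [Real.mul_rpow hK.le (by positivity),
        Real.mul_rpow (Real.rpow_nonneg hc0.le _) (by positivity),
        Real.mul_rpow (Real.rpow_nonneg two_pos.le _) e0]
      have e1 : (c ^ (d : ℝ)) ^ p = ε ^ ((d : ℝ) * p / 2) := by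
        rw [hcrpow, ← Real.rpow_mul hε.le, ← Real.rpow_mul hε.le]
        congr 1; ring
      have e2 : ((2 : ℝ) ^ (d : ℝ)) ^ p = 2 ^ ((d : ℝ) * p) := by
        rw [← Real.rpow_mul two_pos.le]
      have e3 : ((1 + c * ‖x‖) ^ (-(d : ℝ))) ^ p = (1 + c * ‖x‖) ^ (-((d : ℝ) * p)) := by
        rw [← Real.rpow_mul (by positivity : (0 : ℝ) ≤ 1 + c * ‖x‖)]
        congr 1; ring
      rw [e1, e2, e3, hAdef]
      ring
  -- integrate
  have hmajInt : Integrable maj := by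
    simpa only [hmajdef] using (hgInt.comp_smul hc0.ne').const_mul A
  have hmono := integral_mono_of_nonneg
    (Eventually.of_forall fun x => Real.rpow_nonneg (norm_nonneg _) p)
    hmajInt (Eventually.of_forall hpt)
  have hmajval : ∫ x : Ed d, maj x = A * ((ε ^ ((d : ℝ) / 2))⁻¹ * J) := by
    simp only [hmajdef]
    rw [integral_const_mul]
    congr 1
    rw [Measure.integral_comp_smul_of_nonneg volume
        (fun y : Ed d => (1 + ‖y‖) ^ (-((d : ℝ) * p))) c (hR := hc0.le),
      finrank_euclideanSpace_fin, smul_eq_mul]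
    have : c ^ d = ε ^ ((d : ℝ) / 2) := by
      rw [← Real.rpow_natCast c d, hcrpow, ← Real.rpow_mul hε.le]
      congr 1; ring
    rw [this, hJdef]
  -- exponent bookkeeping
  have hE : ε ^ ((d : ℝ) * p / 2) * (ε ^ ((d : ℝ) / 2))⁻¹ = ε ^ ((d : ℝ) * (p - 1) / 2) := by
    rw [← Real.rpow_neg hε.le, ← Real.rpow_add hε]
    congr 1; ring
  have hlhs : A * ((ε ^ ((d : ℝ) / 2))⁻¹ * J)
      = K ^ p * 2 ^ ((d : ℝ) * p) * ε ^ ((d : ℝ) * (p - 1) / 2) * J := by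
    rw [hAdef, ← hE]; ring
  have hrhs : (C * ε ^ ((d : ℝ) * (p - 1) / (2 * p))) ^ p
      = K ^ p * 2 ^ ((d : ℝ) * p) * ε ^ ((d : ℝ) * (p - 1) / 2) * (J + 1) := by
    rw [hCdef]
    rw [Real.mul_rpow (by positivity) (Real.rpow_nonneg hε.le _),
      Real.mul_rpow (by positivity) (Real.rpow_nonneg (by linarith : (0:ℝ) ≤ J + 1) _),
      Real.mul_rpow hK.le (Real.rpow_nonneg two_pos.le _),
      ← Real.rpow_mul (by linarith : (0:ℝ) ≤ J + 1),
      one_div_mul_cancel hpne, Real.rpow_one,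
      ← Real.rpow_mul two_pos.le,
      ← Real.rpow_mul hε.le]
    have : (d : ℝ) * (p - 1) / (2 * p) * p = (d : ℝ) * (p - 1) / 2 := by
      field_simp
    rw [this]
    ring
  have hkey : A * ((ε ^ ((d : ℝ) / 2))⁻¹ * J) ≤ (C * ε ^ ((d : ℝ) * (p - 1) / (2 * p))) ^ p := by
    rw [hlhs, hrhs]
    have hpos : (0 : ℝ) ≤ K ^ p * 2 ^ ((d : ℝ) * p) * ε ^ ((d : ℝ) * (p - 1) / 2) := by
      apply mul_nonneg (mul_nonneg (Real.rpow_nonneg hK.le _) (Real.rpow_nonneg two_pos.le _))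
        (Real.rpow_nonneg hε.le _)
    exact mul_le_mul_of_nonneg_left (by linarith) hpos
  have hYpos : (0 : ℝ) ≤ C * ε ^ ((d : ℝ) * (p - 1) / (2 * p)) := by
    exact mul_nonneg hC.le (Real.rpow_nonneg hε.le _)
  calc (∫ x : Ed d,
        ‖(‖x‖ ^ ((1 : ℝ) - d)) • gradient (fun z : Ed d => θ (c • z)) x
          + ((((1 : ℝ) - d) * (θ (c • x) - 1)) / ‖x‖ ^ ((d : ℝ) + 1)) • x‖ ^ p) ^ (1 / p)
      ≤ (∫ x : Ed d, maj x) ^ (1 / p) := by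
        apply Real.rpow_le_rpow
          (integral_nonneg fun x => Real.rpow_nonneg (norm_nonneg _) _) hmono
        positivity
    _ ≤ ((C * ε ^ ((d : ℝ) * (p - 1) / (2 * p))) ^ p) ^ (1 / p) := by
        apply Real.rpow_le_rpow (by rw [hmajval]; positivity)
          (by rw [hmajval]; exact hkey)
        positivity
    _ = C * ε ^ ((d : ℝ) * (p - 1) / (2 * p)) := by
        rw [← Real.rpow_mul hYpos, mul_one_div_cancel hpne, Real.rpow_one]

end
end
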